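/- Plugging and decomposition are mutually inverse on decompositions in the λρ̂ reduction semantics for applicative order: for any closure c, context C of the λρ̂-calculus, if decompose(plug(C, c)) = DEC(r, C') then plug(C', r↑) = plug(C, c); and for every non-value closure c there exist a unique potential redex r and context C with decompose(c) = DEC(r, C) and plug(C, r↑) = c. -/
import Mathlib


/-- Terms of the pure λ-calculus. -/
inductive Tm : Type
  | var : String → Tm
  | lam : String → Tm → Tm
  | app : Tm → Tm → Tm

mutual
  /-- Closures of the λρ̂-calculus: c ::= t[s] | c c. -/
  inductive Clo : Type
    | sub : Tm → Subst → Clo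
    | app : Clo → Clo → Clo
  /-- Values: v ::= (λx.t)[s]. -/
  inductive Val : Type
    | clos : String → Tm → Subst → Val
  /-- Explicit substitutions. -/
  inductive Subst : Type
    | empty : Subst
    | ext : String → Val → Subst → Subst
  /-- Left-to-right applicative-order reduction contexts:
  C ::= [] | C[[] c] | C[v []]. -/
  inductive Ctx : Type
    | hole : Ctx
    | arg : Ctx → Clo → Ctx
    | fnv : Ctx → Val → Ctx
end

/-- The syntactic coercion ↑ mapping a value into a closure. -/
def upv : Val → Clo
  | .clos x t s => .sub (.lam x t) s

/-- Lookup in an explicit substitution. -/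
def lookup (x : String) : Subst → Option Val
  | .empty => none
  | .ext y v s => if x = y then some v else lookup x s

/-- Potential redexes: r ::= x[s] | v v | (t0 t1)[s]. -/
inductive Red : Type
  | var : String → Subst → Red
  | app : Val → Val → Red
  | prop : Tm → Tm → Subst → Red

/-- The coercion mapping a potential redex to the closure it stands for. -/
def upr : Red → Clo
  | .var x s => .sub (.var x) s
  | .app v0 v1 => .app (upv v0) (upv v1)
  | .prop t0 t1 s => .sub (.app t0 t1) s

/-- Plugging a closure into a reduction context (a total function). -/
def plug : Ctx → Clo → Clo
  | .hole, c => c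
  | .arg C c1, c0 => plug C (.app c0 c1)
  | .fnv C v0, c1 => plug C (.app (upv v0) c1)

/-- States of the decomposition transition system. -/
inductive DConf : Type
  | clos : Clo → Ctx → DConf
  | cont : Ctx → Val → DConf
  | val : Val → DConf
  | dec : Red → Ctx → DConf

/-- The decomposition transition system of the λρ̂-calculus, for
left-to-right applicative order: it maps a value closure to VAL(v) and a
non-value closure to DEC(r,C) where r is the left-to-right innermost
potential redex and C the surrounding context. -/
inductive DStep : DConf → DConf → Prop
  | varsub (x : String) (s : Subst) (C : Ctx) :
      DStep (.clos (.sub (.var x) s) C) (.dec (.var x s) C)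
  | lamsub (x : String) (t : Tm) (s : Subst) (C : Ctx) :
      DStep (.clos (.sub (.lam x t) s) C) (.cont C (.clos x t s))
  | appsub (t0 t1 : Tm) (s : Subst) (C : Ctx) :
      DStep (.clos (.sub (.app t0 t1) s) C) (.dec (.prop t0 t1 s) C)
  | app (c0 c1 : Clo) (C : Ctx) :
      DStep (.clos (.app c0 c1) C) (.clos c0 (.arg C c1))
  | conthole (v : Val) : DStep (.cont .hole v) (.val v)
  | contarg (C : Ctx) (c1 : Clo) (v0 : Val) :
      DStep (.cont (.arg C c1) v0) (.clos c1 (.fnv C v0))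
  | contfnv (C : Ctx) (v0 v1 : Val) :
      DStep (.cont (.fnv C v0) v1) (.dec (.app v0 v1) C)

/-- Denotation of a decomposition configuration as a closure. -/
def den : DConf → Clo
  | .clos c C => plug C c
  | .cont C v => plug C (upv v)
  | .val v => upv v
  | .dec r C => plug C (upr r)

lemma den_step {d d' : DConf} (h : DStep d d') : den d' = den d := by
  cases h <;> rfl

lemma den_rtg {d d' : DConf} (h : Relation.ReflTransGen DStep d d') :
    den d' = den d := by
  induction h with
  | refl => rfl
  | tail _ hstep ih => rw [den_step hstep, ih]

lemma dstep_det {d d1 d2 : DConf} (h1 : DStep d d1) (h2 : DStep d d2) :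
    d1 = d2 := by
  cases h1 <;> cases h2 <;> rfl

lemma dec_stuck {r : Red} {C : Ctx} {d : DConf} :
    ¬ DStep (.dec r C) d := by intro h; cases h

lemma rtg_dec_det {d : DConf} {r1 r2 : Red} {C1 C2 : Ctx}
    (h1 : Relation.ReflTransGen DStep d (.dec r1 C1))
    (h2 : Relation.ReflTransGen DStep d (.dec r2 C2)) :
    r1 = r2 ∧ C1 = C2 := by
  induction h1 using Relation.ReflTransGen.head_induction_on with
  | refl =>
    rcases h2.cases_head with h | ⟨c, hc, _⟩
    · cases h; exact ⟨rfl, rfl⟩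
    · exact absurd hc dec_stuck
  | head hstep _ ih =>
    rcases h2.cases_head with h | ⟨c, hc, hc'⟩
    · subst h; exact absurd hstep dec_stuck
    · cases dstep_det hstep hc; exact ih hc'

/-- Size of a closure. -/
def cloSize : Clo → ℕ
  | .sub _ _ => 1
  | .app c0 c1 => cloSize c0 + cloSize c1 + 1

/-- Size of a context. -/
def ctxSize : Ctx → ℕ
  | .hole => 0
  | .arg C c => ctxSize C + 3 * cloSize c + 1
  | .fnv C _ => ctxSize C

/-- Termination measure for decomposition. -/
def meas : DConf → ℕ
  | .clos c C => 3 * cloSize c + ctxSize C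
  | .cont C _ => ctxSize C + 1
  | .val _ => 0
  | .dec _ _ => 0

lemma meas_step {d d' : DConf} (h : DStep d d') : meas d' < meas d := by
  cases h <;> simp [meas, cloSize, ctxSize] <;> omega

lemma progress (d : DConf) :
    (∃ v, d = .val v) ∨ (∃ r C, d = .dec r C) ∨ ∃ d', DStep d d' := by
  match d with
  | .val v => exact Or.inl ⟨v, rfl⟩
  | .dec r C => exact Or.inr (Or.inl ⟨r, C, rfl⟩)
  | .clos (.sub (.var x) s) C => exact Or.inr (Or.inr ⟨_, .varsub x s C⟩)
  | .clos (.sub (.lam x t) s) C => exact Or.inr (Or.inr ⟨_, .lamsub x t s C⟩)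
  | .clos (.sub (.app t0 t1) s) C => exact Or.inr (Or.inr ⟨_, .appsub t0 t1 s C⟩)
  | .clos (.app c0 c1) C => exact Or.inr (Or.inr ⟨_, .app c0 c1 C⟩)
  | .cont .hole v => exact Or.inr (Or.inr ⟨_, .conthole v⟩)
  | .cont (.arg C c1) v => exact Or.inr (Or.inr ⟨_, .contarg C c1 v⟩)
  | .cont (.fnv C v0) v => exact Or.inr (Or.inr ⟨_, .contfnv C v0 v⟩)

lemma terminates (d : DConf) :
    (∃ v, Relation.ReflTransGen DStep d (.val v)) ∨
    (∃ r C, Relation.ReflTransGen DStep d (.dec r C)) := by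
  generalize hn : meas d = n
  induction n using Nat.strong_induction_on generalizing d with
  | _ n ih =>
    rcases progress d with ⟨v, rfl⟩ | ⟨r, C, rfl⟩ | ⟨d', hd'⟩
    · exact Or.inl ⟨v, .refl⟩
    · exact Or.inr ⟨r, C, .refl⟩
    · subst hn
      rcases ih (meas d') (meas_step hd') d' rfl with ⟨v, hv⟩ | ⟨r, C, hC⟩
      · exact Or.inl ⟨v, .head hd' hv⟩
      · exact Or.inr ⟨r, C, .head hd' hC⟩

/-- Plugging and decomposition are mutually inverse on decompositions in the
λρ̂ reduction semantics: (1) if decompose(plug(C,c)) = DEC(r,C') then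
plug(C',r↑) = plug(C,c); and (2) every non-value closure c decomposes into a
unique potential redex r and context C with decompose(c) = DEC(r,C) and
plug(C,r↑) = c. -/
theorem plug_decompose_inverse :
    (∀ (c : Clo) (C : Ctx) (r : Red) (C' : Ctx),
        Relation.ReflTransGen DStep (.clos (plug C c) .hole) (.dec r C') →
        plug C' (upr r) = plug C c) ∧
    (∀ c : Clo, (¬ ∃ v : Val, c = upv v) →
        ∃! p : Red × Ctx,
          Relation.ReflTransGen DStep (.clos c .hole) (.dec p.1 p.2) ∧
          plug p.2 (upr p.1) = c) := by
  constructor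
  · intro c C r C' h
    have := den_rtg h
    simpa [den, plug] using this
  · intro c hc
    rcases terminates (.clos c .hole) with ⟨v, hv⟩ | ⟨r, C, hC⟩
    · exact absurd ⟨v, by simpa [den, plug] using (den_rtg hv).symm⟩ hc
    · refine ⟨(r, C), ⟨hC, by simpa [den, plug] using den_rtg hC⟩, ?_⟩
      rintro ⟨r', C'⟩ ⟨h', _⟩
      obtain ⟨h1, h2⟩ := rtg_dec_det h' hC
      exact Prod.ext h1 h2
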